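/- arXiv:math/0207076 — 2 statements merged into one kernel-verified Lean document; each statement's English description precedes it below -/
import Mathlib

section
/- Let d ≥ 2 and let P(x,s) be a one-parameter family of degree-d polynomials as below. Then the singular locus of the hypersurface Y ⊂ ℙⁿ × ℂ_s × ℂ_t is exactly the set {([x:0], s, t) : ∂P_d/∂x_i(x,s) = 0 for all i = 1,…,n, P_{d−1}(x,s) = 0, ∂P_d/∂s(x,s) = 0, t ∈ ℂ}. In particular Sing Y is contained in Y^∞ = Y ∩ {x₀ = 0}, is a product space by the t-coordinate, and depends only on the degree-d and degree-(d−1) parts of P in x. -/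
open MvPolynomial Filter CategoryTheory Limits Topology

noncomputable section

abbrev XS (n : ℕ) := Fin n ⊕ Unit
abbrev HV (n : ℕ) := Fin n ⊕ Unit
abbrev TV (n : ℕ) := Fin n ⊕ Fin 3

/-- ℙ^{n-1}, the hyperplane at infinity of ℙⁿ. -/
abbrev PrjInf (n : ℕ) := Projectivization ℂ (Fin n → ℂ)
/-- ℙⁿ. -/
abbrev Prj (n : ℕ) := Projectivization ℂ (HV n → ℂ)

/-- weights for the degree in the `x`-variables only: `s` has weight `0`. -/
def wtx (n : ℕ) : XS n → ℕ := Sum.elim (fun _ => 1) (fun _ => 0)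

/-- `P_q`, the degree-`q` homogeneous part of `P` in the variables `x`. -/
def xpart {n : ℕ} (P : MvPolynomial (XS n) ℂ) (q : ℕ) : MvPolynomial (XS n) ℂ :=
  weightedHomogeneousComponent (wtx n) q P

/-- the evaluation point `(x, s)`. -/
def evA {n : ℕ} (x : Fin n → ℂ) (s : ℂ) : XS n → ℂ := Sum.elim x (fun _ => s)

/-- `deg_x P(·,s) = d` at the parameter value `s`. -/
def DegXAt {n : ℕ} (d : ℕ) (P : MvPolynomial (XS n) ℂ) (s : ℂ) : Prop :=
  (∀ q, d < q → ∀ x : Fin n → ℂ, eval (evA x s) (xpart P q) = 0) ∧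
  (∃ x : Fin n → ℂ, eval (evA x s) (xpart P d) ≠ 0)

/-- the substitution embedding the variables `(x,s)` into the variables `(x,x₀,s,t)`. -/
def embT {n : ℕ} : XS n → MvPolynomial (TV n) ℂ :=
  Sum.elim (fun i => X (Sum.inl i)) (fun _ => X (Sum.inr 1))

/-- The defining polynomial `F = P̃(x,x₀,s) - t·x₀^d` of the total space
`Y ⊂ ℙⁿ × ℂ_s × ℂ_t`, where `P̃ = Σ_{q ≤ d} x₀^{d-q} P_q(x,s)` is the homogenization
of `P` in `x` by the variable `x₀`. -/
def FY {n : ℕ} (d : ℕ) (P : MvPolynomial (XS n) ℂ) : MvPolynomial (TV n) ℂ :=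
  (∑ q ∈ Finset.range (d+1), (X (Sum.inr 0))^(d-q) * aeval embT (xpart P q))
    - X (Sum.inr 2) * (X (Sum.inr 0))^d

/-- the evaluation point `((x,x₀), s, t)` of the variables of `FY`. -/
def evT {n : ℕ} (u : HV n → ℂ) (s t : ℂ) : TV n → ℂ :=
  Sum.elim (fun i => u (Sum.inl i)) ![u (Sum.inr ()), s, t]

/-- `([u], s, t) ∈ Y`. -/
def OnY {n : ℕ} (d : ℕ) (P : MvPolynomial (XS n) ℂ) (u : HV n → ℂ) (s t : ℂ) : Prop :=
  eval (evT u s t) (FY d P) = 0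

/-- all partial derivatives of the defining equation of `Y` — with respect to the
homogeneous coordinates `(x, x₀)` and the affine coordinates `s, t` — vanish at
`([u], s, t)`; together with `OnY` this says `([u],s,t)` is a singular point of `Y`. -/
def AllDerivsVanish {n : ℕ} (d : ℕ) (P : MvPolynomial (XS n) ℂ) (u : HV n → ℂ)
    (s t : ℂ) : Prop :=
  ∀ v : TV n, eval (evT u s t) (pderiv v (FY d P)) = 0

/-- the partial derivatives with respect to the homogeneous coordinates `(x, x₀)`
vanish at `([u], s, t)`; together with `OnY` this says `[u]` is a singular point of the
projective fiber `Y_{s,t}`. -/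
def FiberDerivsVanish {n : ℕ} (d : ℕ) (P : MvPolynomial (XS n) ℂ) (u : HV n → ℂ)
    (s t : ℂ) : Prop :=
  (∀ i : Fin n, eval (evT u s t) (pderiv (Sum.inl i) (FY d P)) = 0) ∧
    eval (evT u s t) (pderiv (Sum.inr 0) (FY d P)) = 0

/-- the partial derivatives with respect to `(x, x₀)` and `t` (but not `s`) vanish;
together with `OnY` this identifies the singular points of `Y_{s,ℂ}`, resp. the critical
points of the projection `σ : Y → ℂ_s`. -/
def SliceDerivsVanish {n : ℕ} (d : ℕ) (P : MvPolynomial (XS n) ℂ) (u : HV n → ℂ)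
    (s t : ℂ) : Prop :=
  FiberDerivsVanish d P u s t ∧ eval (evT u s t) (pderiv (Sum.inr 2) (FY d P)) = 0

/-- `[x] ∈ W_s`: all `∂P_d/∂x_i` vanish at `(x,s)`. -/
def WCond {n : ℕ} (d : ℕ) (P : MvPolynomial (XS n) ℂ) (x : Fin n → ℂ) (s : ℂ) : Prop :=
  ∀ i : Fin n, eval (evA x s) (pderiv (Sum.inl i) (xpart P d)) = 0

/-- `[x] ∈ Σ_s`: moreover `P_{d-1}(x,s) = 0`. -/
def SCond {n : ℕ} (d : ℕ) (P : MvPolynomial (XS n) ℂ) (x : Fin n → ℂ) (s : ℂ) : Prop :=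
  WCond d P x s ∧ eval (evA x s) (xpart P (d-1)) = 0

/-- `φ_d(x) = ∂P_d/∂s (x, 0) = 0`. -/
def PhiCond {n : ℕ} (d : ℕ) (P : MvPolynomial (XS n) ℂ) (x : Fin n → ℂ) : Prop :=
  eval (evA x 0) (pderiv (Sum.inr ()) (xpart P d)) = 0

/-- `W_s ⊂ ℙ^{n-1}` as a set of projective points. -/
def Wset {n : ℕ} (d : ℕ) (P : MvPolynomial (XS n) ℂ) (s : ℂ) : Set (PrjInf n) :=
  {p | WCond d P p.rep s}

/-- `Σ_s ⊂ ℙ^{n-1}` as a set of projective points. -/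
def Sigset {n : ℕ} (d : ℕ) (P : MvPolynomial (XS n) ℂ) (s : ℂ) : Set (PrjInf n) :=
  {p | SCond d P p.rep s}

/-- `f_s = P(·,s)` as a polynomial in `x`. -/
def fS {n : ℕ} (P : MvPolynomial (XS n) ℂ) (s : ℂ) : MvPolynomial (Fin n) ℂ :=
  aeval (Sum.elim X (fun _ => C s)) P

/-- `x` is an affine critical point of `f_s`, i.e. `∂P/∂x_i(x,s) = 0` for all `i`. -/
def CritPt {n : ℕ} (P : MvPolynomial (XS n) ℂ) (x : Fin n → ℂ) (s : ℂ) : Prop :=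
  ∀ i : Fin n, eval (evA x s) (pderiv (Sum.inl i) P) = 0

/-- the set of singular points of the compactified fiber `Y_{s,t} ⊂ ℙⁿ`. -/
def SingYst {n : ℕ} (d : ℕ) (P : MvPolynomial (XS n) ℂ) (s t : ℂ) : Set (Prj n) :=
  {p | OnY d P p.rep s t ∧ FiberDerivsVanish d P p.rep s t}

/-- `f₀ = P(·,0)` is a FISI polynomial: it has finitely many critical points, the
projective closure of each of its fibers has only isolated (= finitely many) singular
points, and the singular locus `W₀` of the slice at infinity is finite. -/
def FISIat {n : ℕ} (d : ℕ) (P : MvPolynomial (XS n) ℂ) (s : ℂ) : Prop :=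
  {x : Fin n → ℂ | CritPt P x s}.Finite ∧ (∀ t : ℂ, (SingYst d P s t).Finite) ∧
    (Wset d P s).Finite

/-- `P` is a FISI deformation: `f₀` is FISI, `W₀` is finite and every `f_s`, for `s` in a
neighbourhood of `0`, has only finitely many critical points. -/
def FISIdef {n : ℕ} (d : ℕ) (P : MvPolynomial (XS n) ℂ) : Prop :=
  FISIat d P 0 ∧ ∃ ε > (0:ℝ), ∀ s : ℂ, ‖s‖ < ε → {x : Fin n → ℂ | CritPt P x s}.Finite

/-- The "Milnor-type" local dimension: given polynomial germs `gs` at a point `a ∈ ℂᵐ`,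
this is the `ℂ`-dimension of the formal power series ring at `a` (identified with
`ℂ[[X]]` via `X ↦ X - a`) modulo the ideal generated by the germs. -/
def germDim {m : ℕ} (gs : Set (MvPolynomial (Fin m) ℂ)) (a : Fin m → ℂ) : ℕ :=
  Module.finrank ℂ (MvPowerSeries (Fin m) ℂ ⧸ Ideal.span
    ((fun g => (MvPolynomial.coeToMvPowerSeries.ringHom
        (aeval (fun i => X i + C (a i)) g) : MvPowerSeries (Fin m) ℂ)) '' gs))

/-- the (choice of an) index `j` with `p.rep j ≠ 0`, used to normalize `v_j = 1`
and to work in the chart `x_j = 1` of `ℙⁿ`. -/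
def jp {n : ℕ} (p : PrjInf n) : Fin n :=
  (Function.ne_iff.mp p.rep_nonzero).choose

lemma jp_spec {n : ℕ} (p : PrjInf n) : p.rep (jp p) ≠ 0 :=
  (Function.ne_iff.mp p.rep_nonzero).choose_spec

/-- the chart coordinates of the point at infinity `p = [v:0]`, where `v` is normalized
by `v_{j(p)} = 1`, in the chart `x_{j(p)} = 1` of `ℙⁿ`; the slot `j(p)` of the chart
carries the coordinate `x₀`, which is `0` at `p`. -/
def chartPt {n : ℕ} (p : PrjInf n) : Fin n → ℂ :=
  fun i => if i = jp p then 0 else p.rep i / p.rep (jp p)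

/-- the chart equation of the compactified fiber `Y_{s,t}` in the chart `x_j = 1` of
`ℙⁿ`: substitute `x_j = 1` in the homogeneous defining equation `FY`, the chart slot `j`
carrying the coordinate `x₀`. -/
def chartEq {n : ℕ} (d : ℕ) (P : MvPolynomial (XS n) ℂ) (j : Fin n) (s t : ℂ) :
    MvPolynomial (Fin n) ℂ :=
  aeval (Sum.elim (fun i => if i = j then 1 else X i) ![X j, C s, C t]) (FY d P)

/-- the chart equation of the hypersurface `{P_d(·,s) = 0} ⊂ ℙ^{n-1}` in the chart
`x_j = 1` of `ℙ^{n-1}` (the chart variable `X j` is unused). -/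
def chartEqInf {n : ℕ} (d : ℕ) (P : MvPolynomial (XS n) ℂ) (j : Fin n) (s : ℂ) :
    MvPolynomial (Fin n) ℂ :=
  aeval (fun i => if i = j then 1 else X i) (aeval (Sum.elim X (fun _ => C s)) (xpart P d))

/-- `μ_p(t,s)`, the Milnor number of the isolated singularity of the compactified fiber
`Y_{s,t}` at the point `p` of the hyperplane at infinity. -/
def muP {n : ℕ} (d : ℕ) (P : MvPolynomial (XS n) ℂ) (p : PrjInf n) (s t : ℂ) : ℕ :=
  germDim (Set.range fun i => pderiv i (chartEq d P (jp p) s t)) (chartPt p)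

/-- `μ_{p,gen}(s) = min_{t ∈ ℂ} μ_p(t,s)`. -/
def muGen {n : ℕ} (d : ℕ) (P : MvPolynomial (XS n) ℂ) (p : PrjInf n) (s : ℂ) : ℕ :=
  sInf (Set.range (muP d P p s))

/-- the local Milnor–Lê number `λ_{p,t}(s) = μ_p(t,s) − μ_{p,gen}(s)`. -/
def lamP {n : ℕ} (d : ℕ) (P : MvPolynomial (XS n) ℂ) (p : PrjInf n) (t s : ℂ) : ℕ :=
  muP d P p s t - muGen d P p s

/-- `μ_p^∞(s)`, the Milnor number at `p` of the hypersurface `{P_d(·,s)=0} ⊂ ℙ^{n-1}`: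
computed in the chart `x_{j(p)} = 1`, adding the generator `X (j p)` to kill the unused
chart variable. -/
def muInf {n : ℕ} (d : ℕ) (P : MvPolynomial (XS n) ℂ) (p : PrjInf n) (s : ℂ) : ℕ :=
  germDim ({g | ∃ i, i ≠ jp p ∧ g = pderiv i (chartEqInf d P (jp p) s)} ∪ {X (jp p)})
    (chartPt p)

/-- the total Milnor number `μ(s)` of the affine singularities of `f_s`. -/
def muTot {n : ℕ} (P : MvPolynomial (XS n) ℂ) (s : ℂ) : ℕ :=
  Module.finrank ℂ (MvPolynomial (Fin n) ℂ ⧸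
    Ideal.span (Set.range fun i => pderiv i (fS P s)))

/-- the local Milnor number `μ_a(f_s)` of `f_s` at the point `a ∈ ℂⁿ`. -/
def muAt {n : ℕ} (P : MvPolynomial (XS n) ℂ) (s : ℂ) (a : Fin n → ℂ) : ℕ :=
  germDim (Set.range fun i => pderiv i (fS P s)) a

/-- the total Milnor–Lê number at infinity `λ(s) = Σ_{p ∈ Σ_s} Σ_{t ∈ ℂ} λ_{p,t}(s)`
(all but finitely many summands vanish). -/
def lamTot {n : ℕ} (d : ℕ) (P : MvPolynomial (XS n) ℂ) (s : ℂ) : ℕ :=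
  ∑ᶠ p ∈ Sigset d P s, ∑ᶠ t : ℂ, lamP d P p t s

/-- the chart coordinates of the affine point `[x : 1] ∈ ℙⁿ` in the chart `x_j = 1`,
the slot `j` carrying the coordinate `x₀` (i.e. `1/x_j`). -/
def chartCo {n : ℕ} (j : Fin n) (x : Fin n → ℂ) : Fin n → ℂ :=
  fun i => if i = j then 1 / x j else x i / x j

/-- the affine discriminant `Δ_P ⊂ ℂ_s × ℂ_t`: the closure of the set of pairs
`(s, f_s(x))` over the affine critical points `x` of `f_s`. -/
def DeltaP {n : ℕ} (P : MvPolynomial (XS n) ℂ) : Set (ℂ × ℂ) :=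
  closure {w : ℂ × ℂ | ∃ x : Fin n → ℂ, CritPt P x w.1 ∧ w.2 = eval (evA x w.1) P}


/-! Write `F = P̃ - t x₀^d`. Since `∂F/∂t = -x₀^d`, a singular point of `Y` lies on
`H^∞ = {x₀ = 0}`. There `F`, `∂F/∂xᵢ` and `∂F/∂s` reduce to `P_d`, `∂P_d/∂xᵢ` and `∂P_d/∂s`,
and, because `d ≥ 2`, `∂F/∂x₀` reduces to `P_{d-1}`. Finally `P_d` vanishes wherever all
`∂P_d/∂xᵢ` do, by Euler's identity for the `x`-homogeneous polynomial `P_d`. -/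

namespace MvPolynomial

theorem pderiv_rename_of_notMem_range {R σ τ : Type*} [CommSemiring R] (f : σ → τ) {v : τ}
    (hv : v ∉ Set.range f) (p : MvPolynomial σ R) : pderiv v (rename f p) = 0 := by
  classical
  refine pderiv_eq_zero_of_notMem_vars fun hmem => hv ?_
  obtain ⟨w, -, rfl⟩ := Finset.mem_image.mp (vars_rename f p hmem)
  exact ⟨w, rfl⟩

theorem IsWeightedHomogeneous.eval_eq_zero_of_eval_pderiv_eq_zero {R σ : Type*}
    [CommSemiring R] [IsAddTorsionFree R] [Fintype σ] {w : σ → ℕ} {m : ℕ}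
    {φ : MvPolynomial σ R} (hφ : φ.IsWeightedHomogeneous w m) (hm : m ≠ 0) (a : σ → R)
    (hder : ∀ i, w i ≠ 0 → eval a (pderiv i φ) = 0) : eval a φ = 0 := by
  have euler := congrArg (eval a) hφ.sum_weight_X_mul_pderiv
  rw [map_sum, Finset.sum_eq_zero, map_nsmul, eq_comm, nsmul_eq_zero_iff_right hm] at euler
  · exact euler
  intro i _
  by_cases hw : w i = 0
  · simp [hw]
  · simp [hder i hw]

end MvPolynomial

namespace Finset

variable {R : Type*} [Semiring R]

theorem sum_range_zero_pow_sub_mul (d : ℕ) (c : ℕ → R) :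
    ∑ q ∈ range (d + 1), (0 : R) ^ (d - q) * c q = c d := by
  rw [sum_range_succ, Nat.sub_self, pow_zero, one_mul, sum_eq_zero, zero_add]
  intro q hq
  rw [zero_pow (by grind), zero_mul]

theorem sum_range_mul_natCast_sub_mul_zero_pow {d : ℕ} (hd : d ≠ 0) (c : ℕ → R) :
    ∑ q ∈ range (d + 1), c q * (((d - q : ℕ) : R) * (0 : R) ^ (d - q - 1)) = c (d - 1) := by
  rw [sum_eq_single (d - 1)]
  · simp [Nat.sub_sub_self (Nat.one_le_iff_ne_zero.mpr hd)]
  · intro q hq hne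
    rcases Nat.lt_or_ge q (d - 1) with h | h
    · rw [zero_pow (by omega), mul_zero, mul_zero]
    · obtain rfl : q = d := by grind
      simp
  · grind

end Finset

theorem eval_xpart_eq_zero_of_eval_pderiv_eq_zero {n d : ℕ} (hd : d ≠ 0)
    (P : MvPolynomial (XS n) ℂ) (x : Fin n → ℂ) (s : ℂ)
    (h : ∀ i, eval (evA x s) (pderiv (Sum.inl i) (xpart P d)) = 0) :
    eval (evA x s) (xpart P d) = 0 :=
  (weightedHomogeneousComponent_isWeightedHomogeneous d P).eval_eq_zero_of_eval_pderiv_eq_zero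
    hd _ fun | Sum.inl i, _ => h i | Sum.inr _, hw => absurd rfl hw

def embTVar {n : ℕ} : XS n → TV n := Sum.elim Sum.inl fun _ => Sum.inr 1

theorem embTVar_injective {n : ℕ} : Function.Injective (embTVar (n := n)) := by
  rintro (a | a) (b | b) h <;> simp_all [embTVar]

theorem aeval_embT {n : ℕ} (g : MvPolynomial (XS n) ℂ) : aeval embT g = rename embTVar g := by
  have : (embT : XS n → MvPolynomial (TV n) ℂ) = X ∘ embTVar := by
    ext1 (i | _) <;> rfl
  rw [rename_eq_aeval, this]

theorem evT_comp_embTVar {n : ℕ} (u : HV n → ℂ) (s t : ℂ) :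
    evT u s t ∘ embTVar = evA (fun i => u (Sum.inl i)) s := by
  ext (i | _) <;> rfl

@[simp] theorem evT_inr_zero {n : ℕ} (u : HV n → ℂ) (s t : ℂ) :
    evT u s t (Sum.inr 0) = u (Sum.inr ()) := rfl

@[simp] theorem evT_inr_two {n : ℕ} (u : HV n → ℂ) (s t : ℂ) : evT u s t (Sum.inr 2) = t := rfl

theorem FY_eq_sum_rename {n : ℕ} (d : ℕ) (P : MvPolynomial (XS n) ℂ) :
    FY d P =
      (∑ q ∈ Finset.range (d + 1), X (Sum.inr 0) ^ (d - q) * rename embTVar (xpart P q))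
        - X (Sum.inr 2) * X (Sum.inr 0) ^ d := by
  simp only [FY, aeval_embT]

theorem eval_pderiv_t_FY {n : ℕ} (d : ℕ) (P : MvPolynomial (XS n) ℂ) (u : HV n → ℂ)
    (s t : ℂ) : eval (evT u s t) (pderiv (Sum.inr 2) (FY d P)) = -u (Sum.inr ()) ^ d := by
  have hrange : Sum.inr 2 ∉ Set.range (embTVar (n := n)) := by rintro ⟨_ | _, ⟨⟩⟩
  simp [FY_eq_sum_rename, pderiv_rename_of_notMem_range _ hrange]

section AtInfinity

variable {n d : ℕ} (P : MvPolynomial (XS n) ℂ) {u : HV n → ℂ} (s t : ℂ)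

theorem eval_FY_of_eq_zero (hu : u (Sum.inr ()) = 0) (hd : d ≠ 0) :
    eval (evT u s t) (FY d P) = eval (evA (fun i => u (Sum.inl i)) s) (xpart P d) := by
  simp [FY_eq_sum_rename, eval_rename, evT_comp_embTVar, hu, Finset.sum_range_zero_pow_sub_mul,
    hd]

theorem eval_pderiv_embTVar_FY_of_eq_zero (hu : u (Sum.inr ()) = 0) (w : XS n) :
    eval (evT u s t) (pderiv (embTVar w) (FY d P)) =
      eval (evA (fun i => u (Sum.inl i)) s) (pderiv w (xpart P d)) := by
  have h0 : embTVar w ≠ Sum.inr 0 := by cases w <;> simp [embTVar]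
  have h2 : embTVar w ≠ Sum.inr 2 := by cases w <;> simp [embTVar]
  simp [FY_eq_sum_rename, pderiv_rename embTVar_injective, h0.symm, h2.symm, eval_rename,
    evT_comp_embTVar, hu, Finset.sum_range_zero_pow_sub_mul]

theorem eval_pderiv_x0_FY_of_eq_zero (hu : u (Sum.inr ()) = 0) (hd : 2 ≤ d) :
    eval (evT u s t) (pderiv (Sum.inr 0) (FY d P)) =
      eval (evA (fun i => u (Sum.inl i)) s) (xpart P (d - 1)) := by
  have hrange : Sum.inr 0 ∉ Set.range (embTVar (n := n)) := by rintro ⟨_ | _, ⟨⟩⟩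
  simp [FY_eq_sum_rename, pderiv_rename_of_notMem_range _ hrange, eval_rename,
    evT_comp_embTVar, hu]
  rw [Finset.sum_range_mul_natCast_sub_mul_zero_pow (by omega), zero_pow (by omega), mul_zero,
    mul_zero, sub_zero]

theorem allDerivsVanish_iff_of_eq_zero (hu : u (Sum.inr ()) = 0) (hd : 2 ≤ d) :
    AllDerivsVanish d P u s t ↔
      (∀ i : Fin n,
          eval (evA (fun i => u (Sum.inl i)) s) (pderiv (Sum.inl i) (xpart P d)) = 0) ∧
        eval (evA (fun i => u (Sum.inl i)) s) (xpart P (d - 1)) = 0 ∧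
        eval (evA (fun i => u (Sum.inl i)) s) (pderiv (Sum.inr ()) (xpart P d)) = 0 := by
  have ht := eval_pderiv_t_FY d P u s t
  rw [hu, zero_pow (by omega), neg_zero] at ht
  have hx (i : Fin n) := eval_pderiv_embTVar_FY_of_eq_zero (d := d) P s t hu (Sum.inl i)
  have hs := eval_pderiv_embTVar_FY_of_eq_zero (d := d) P s t hu (Sum.inr ())
  simp only [embTVar, Sum.elim_inl, Sum.elim_inr] at hx hs
  simp only [AllDerivsVanish, Sum.forall, Fin.forall_fin_succ, Fin.succ_zero_eq_one,
    Fin.succ_one_eq_two, IsEmpty.forall_iff, hx, hs, ht, eval_pderiv_x0_FY_of_eq_zero P s t hu hd,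
    and_true]

end AtInfinity

theorem stmt0_general {n d : ℕ} (hd : 2 ≤ d) (P : MvPolynomial (XS n) ℂ) :
    ∀ (u : HV n → ℂ), u ≠ 0 → ∀ s t : ℂ,
      (OnY d P u s t ∧ AllDerivsVanish d P u s t) ↔
        (u (Sum.inr ()) = 0 ∧
          (∀ i : Fin n, eval (evA (fun i => u (Sum.inl i)) s)
              (pderiv (Sum.inl i) (xpart P d)) = 0) ∧
          eval (evA (fun i => u (Sum.inl i)) s) (xpart P (d-1)) = 0 ∧
          eval (evA (fun i => u (Sum.inl i)) s)
              (pderiv (Sum.inr ()) (xpart P d)) = 0) := by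
  intro u _ s t
  constructor
  · rintro ⟨-, hAll⟩
    have hu : u (Sum.inr ()) = 0 := by
      have ht := hAll (Sum.inr 2)
      rwa [eval_pderiv_t_FY, neg_eq_zero, pow_eq_zero_iff (by omega)] at ht
    exact ⟨hu, (allDerivsVanish_iff_of_eq_zero P s t hu hd).1 hAll⟩
  · rintro ⟨hu, hW, hrest⟩
    refine ⟨?_, (allDerivsVanish_iff_of_eq_zero P s t hu hd).2 ⟨hW, hrest⟩⟩
    rw [OnY, eval_FY_of_eq_zero P s t hu (by omega)]
    exact eval_xpart_eq_zero_of_eval_pderiv_eq_zero (by omega) P _ s hW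

/-- For a one-parameter family `P(x,s)` of degree-`d` polynomials
(`d ≥ 2`), the singular locus of `Y ⊂ ℙⁿ × ℂ_s × ℂ_t` is exactly
`{([x:0], s, t) : ∂P_d/∂x_i(x,s) = 0 ∀i, P_{d-1}(x,s) = 0, ∂P_d/∂s(x,s) = 0, t ∈ ℂ}`. -/
theorem stmt0 {n d : ℕ} (hn : 2 ≤ n) (hd : 2 ≤ d) (P : MvPolynomial (XS n) ℂ)
    (hdeg : ∀ s : ℂ, DegXAt d P s) :
    ∀ (u : HV n → ℂ), u ≠ 0 → ∀ s t : ℂ,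
      (OnY d P u s t ∧ AllDerivsVanish d P u s t) ↔
        (u (Sum.inr ()) = 0 ∧
          (∀ i : Fin n, eval (evA (fun i => u (Sum.inl i)) s)
              (pderiv (Sum.inl i) (xpart P d)) = 0) ∧
          eval (evA (fun i => u (Sum.inl i)) s) (xpart P (d-1)) = 0 ∧
          eval (evA (fun i => u (Sum.inl i)) s)
              (pderiv (Sum.inr ()) (xpart P d)) = 0) :=
  stmt0_general hd P
end
end

section
/- Let P be a one-parameter FISI deformation of f₀, of degree d ≥ 2. Suppose (x_k, s_k) is a sequence in ℂⁿ × ℂ with ∂P/∂x_i(x_k, s_k) = 0 for all i, s_k → 0, |x_k| → ∞, and such that [x_k : 1] converges in ℙⁿ to a point [v : 0] of the hyperplane at infinity. Then ∂P_d/∂x_i(v, 0) = 0 for all i = 1,…,n (i.e. [v] ∈ W₀). If moreover the critical values P(x_k, s_k) converge to some t₀ ∈ ℂ, then in addition P_{d−1}(v, 0) = 0 (i.e. [v] ∈ Σ₀). (In the paper's terms: the type II part of the critical locus satisfies Γ_{II} ∩ {x₀ = 0} ⊂ Σ₀ × {0} × ℂ, and the type III part satisfies Γ_{III} ∩ {x₀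 = 0} ⊂ W₀ × {0} × {∞}.) -/
open MvPolynomial Filter CategoryTheory Limits Topology

noncomputable section

/-! Near `s = 0` the polynomial splits as `P = ∑_{q ≤ d} P_q` into `x`-homogeneous parts. At a
critical point `0 = ∂P/∂x_i = ∑_q ∂P_q/∂x_i`, and Euler's identity `∑ x_i ∂P_q/∂x_i = q P_q` turns
`d · P` into `∑_{q < d} (d - q) P_q`. Both are convergent sums `∑_{q ≤ d-1} F_q(x_k, s_k)` with
`F_q` homogeneous of degree `q`. Multiplied by `c_k^{d-1} → 0` they tend to `0`, while by
homogeneity the product is `∑_q c_k^{d-1-q} F_q(c_k x_k, s_k)`, whose limit is the top term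
`F_{d-1}(v, 0)`. -/

namespace MvPolynomial.IsWeightedHomogeneous

theorem eval_pow_mul {σ R : Type*} [CommRing R] {w : σ → ℕ} {m : ℕ} {Q : MvPolynomial σ R}
    (hQ : Q.IsWeightedHomogeneous w m) (c : R) (f : σ → R) :
    eval (fun j => c ^ w j * f j) Q = c ^ m * eval f Q := by
  induction hQ using IsWeightedHomogeneous.induction_on with
  | zero => simp
  | add p q _ _ hp hq => rw [map_add, map_add, hp, hq, mul_add]
  | monomial μ r hμ =>
    simp only [eval_monomial, mul_pow, Finsupp.prod_mul, ← pow_mul]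
    rw [← hμ, Finsupp.weight_apply, Finsupp.sum, Finsupp.prod, Finset.prod_pow_eq_pow_sum]
    simp only [smul_eq_mul, mul_comm (μ _)]
    ring

end MvPolynomial.IsWeightedHomogeneous

section

variable {n : ℕ}

theorem isWeightedHomogeneous_xpart (P : MvPolynomial (XS n) ℂ) (q : ℕ) :
    (xpart P q).IsWeightedHomogeneous (wtx n) q :=
  weightedHomogeneousComponent_isWeightedHomogeneous q P

theorem eval_evA_smul {Q : MvPolynomial (XS n) ℂ} {m : ℕ}
    (hQ : Q.IsWeightedHomogeneous (wtx n) m) (c : ℂ) (x : Fin n → ℂ) (s : ℂ) :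
    eval (evA (c • x) s) Q = c ^ m * eval (evA x s) Q := by
  have : evA (c • x) s = fun j => c ^ wtx n j * evA x s j := by
    funext j; cases j <;> simp [evA, wtx]
  rw [this, hQ.eval_pow_mul]

theorem sum_mul_eval_pderiv_inl {Q : MvPolynomial (XS n) ℂ} {m : ℕ}
    (hQ : Q.IsWeightedHomogeneous (wtx n) m) (x : Fin n → ℂ) (s : ℂ) :
    ∑ i, x i * eval (evA x s) (pderiv (Sum.inl i) Q) = m * eval (evA x s) Q := by
  have := congrArg (eval (evA x s)) hQ.sum_weight_X_mul_pderiv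
  simpa [Fintype.sum_sum_type, wtx, evA] using this

theorem pderiv_inl_xpart_zero (P : MvPolynomial (XS n) ℂ) (i : Fin n) :
    pderiv (Sum.inl i) (xpart P 0) = 0 := by
  apply pderiv_eq_zero_of_notMem_vars
  intro hi
  obtain ⟨μ, hμ, hiμ⟩ := (mem_vars_iff_mem_support _).1 hi
  have hw : Finsupp.weight (wtx n) μ = 0 :=
    isWeightedHomogeneous_xpart P 0 (mem_support_iff.mp hμ)
  have := Finsupp.le_weight (wtx n) (s := Sum.inl i) (by simp [wtx]) μ
  exact Finsupp.mem_support_iff.1 hiμ (by omega)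

theorem eval_fS (Q : MvPolynomial (XS n) ℂ) (s : ℂ) (x : Fin n → ℂ) :
    eval x (fS Q s) = eval (evA x s) Q :=
  (aeval_sumElim (S := ℂ) (T := ℂ) Q (fun _ : Unit => s) x).symm

theorem pderiv_fS (Q : MvPolynomial (XS n) ℂ) (s : ℂ) (i : Fin n) :
    pderiv i (fS Q s) = fS (pderiv (Sum.inl i) Q) s :=
  (aeval_sumElim_pderiv_inl Q (fun _ : Unit => s) i).symm

theorem eval_pderiv_inl_eq_zero {Q : MvPolynomial (XS n) ℂ} {s : ℂ}
    (hQ : ∀ y, eval (evA y s) Q = 0) (i : Fin n) (x : Fin n → ℂ) :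
    eval (evA x s) (pderiv (Sum.inl i) Q) = 0 := by
  have hfS : fS Q s = 0 := MvPolynomial.funext fun y => by simp [eval_fS, hQ]
  rw [← eval_fS, ← pderiv_fS, hfS, map_zero, map_zero]

theorem map_eq_sum_xpart {M : Type*} [AddCommMonoid M] (L : MvPolynomial (XS n) ℂ →+ M)
    {P : MvPolynomial (XS n) ℂ} {d : ℕ} (hL : ∀ q, d < q → L (xpart P q) = 0) :
    L P = ∑ q ∈ Finset.range (d + 1), L (xpart P q) := by
  set N := max d (weightedTotalDegree (wtx n) P)
  have hsupp : (Function.support fun q => xpart P q) ⊆ Finset.range (N + 1) := by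
    intro q hq
    by_contra hqN
    exact Function.mem_support.1 hq
      (weightedHomogeneousComponent_eq_zero _ _ (by simp at hqN; omega))
  calc L P = L (∑ q ∈ Finset.range (N + 1), xpart P q) := by
        rw [← finsum_eq_finsetSum_of_support_subset _ hsupp]
        exact congrArg L (finsum_weightedHomogeneousComponent (wtx n) P).symm
    _ = ∑ q ∈ Finset.range (d + 1), L (xpart P q) := by
        rw [map_sum]
        refine (Finset.sum_subset (Finset.range_subset_range.2 (by omega)) fun q _ hq => ?_).symm
        exact hL q (by simpa using hq)

variable {P : MvPolynomial (XS n) ℂ} {d : ℕ} {x : Fin n → ℂ} {s : ℂ}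

theorem eval_pderiv_inl_eq_sum_xpart
    (hhigh : ∀ q, d < q → ∀ y, eval (evA y s) (xpart P q) = 0) (i : Fin n) :
    eval (evA x s) (pderiv (Sum.inl i) P) =
      ∑ q ∈ Finset.range (d + 1), eval (evA x s) (pderiv (Sum.inl i) (xpart P q)) :=
  map_eq_sum_xpart ((eval (evA x s)).toAddMonoidHom.comp (pderiv (Sum.inl i)).toAddMonoidHom)
    fun q hq => eval_pderiv_inl_eq_zero (hhigh q hq) i x

theorem natCast_mul_eval_eq_sum_xpart (hcrit : CritPt P x s)
    (hhigh : ∀ q, d < q → ∀ y, eval (evA y s) (xpart P q) = 0) :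
    (d : ℂ) * eval (evA x s) P =
      ∑ q ∈ Finset.range d, ((d : ℂ) - q) * eval (evA x s) (xpart P q) := by
  have hval : eval (evA x s) P = ∑ q ∈ Finset.range (d + 1), eval (evA x s) (xpart P q) :=
    map_eq_sum_xpart (eval (evA x s)).toAddMonoidHom fun q hq => hhigh q hq x
  have heuler : ∑ q ∈ Finset.range (d + 1), (q : ℂ) * eval (evA x s) (xpart P q) = 0 := by
    calc ∑ q ∈ Finset.range (d + 1), (q : ℂ) * eval (evA x s) (xpart P q)
        = ∑ i, x i * ∑ q ∈ Finset.range (d + 1),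
            eval (evA x s) (pderiv (Sum.inl i) (xpart P q)) := by
          simp only [← sum_mul_eval_pderiv_inl (isWeightedHomogeneous_xpart P _), Finset.mul_sum]
          exact Finset.sum_comm
      _ = 0 := Finset.sum_eq_zero fun i _ => by
          rw [← eval_pderiv_inl_eq_sum_xpart hhigh, hcrit i, mul_zero]
  calc (d : ℂ) * eval (evA x s) P
      = ∑ q ∈ Finset.range (d + 1), ((d : ℂ) - q) * eval (evA x s) (xpart P q) := by
        simp only [sub_mul, Finset.sum_sub_distrib, heuler, sub_zero, ← Finset.mul_sum, hval]
    _ = ∑ q ∈ Finset.range d, ((d : ℂ) - q) * eval (evA x s) (xpart P q) := by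
        simp [Finset.sum_range_succ]

end

theorem eval_eq_zero_of_tendsto_sum {n m : ℕ} (hm : m ≠ 0) {F : ℕ → MvPolynomial (XS n) ℂ}
    (hF : ∀ q, (F q).IsWeightedHomogeneous (wtx n) q) {x : ℕ → Fin n → ℂ} {s c : ℕ → ℂ}
    {v : Fin n → ℂ} {s₀ L : ℂ} (hs : Tendsto s atTop (𝓝 s₀)) (hc0 : Tendsto c atTop (𝓝 0))
    (hcx : Tendsto (fun k => c k • x k) atTop (𝓝 v))
    (hsum : Tendsto (fun k => ∑ q ∈ Finset.range (m + 1), eval (evA (x k) (s k)) (F q))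
      atTop (𝓝 L)) :
    eval (evA v s₀) (F m) = 0 := by
  have hev (Q : MvPolynomial (XS n) ℂ) :
      Tendsto (fun k => eval (evA (c k • x k) (s k)) Q) atTop (𝓝 (eval (evA v s₀) Q)) := by
    refine ((continuous_eval Q).tendsto _).comp (tendsto_pi_nhds.2 fun j => ?_)
    cases j with
    | inl i => exact (continuous_apply i).continuousAt.tendsto.comp hcx
    | inr _ => exact hs
  have hscaled (k : ℕ) :
      c k ^ m * ∑ q ∈ Finset.range (m + 1), eval (evA (x k) (s k)) (F q) =
        ∑ q ∈ Finset.range (m + 1), c k ^ (m - q) * eval (evA (c k • x k) (s k)) (F q) := by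
    rw [Finset.mul_sum]
    refine Finset.sum_congr rfl fun q hq => ?_
    rw [eval_evA_smul (hF q), ← mul_assoc, ← pow_add,
      Nat.sub_add_cancel (Nat.lt_succ_iff.1 (Finset.mem_range.1 hq))]
  have hlim₀ : Tendsto (fun k => ∑ q ∈ Finset.range (m + 1),
      c k ^ (m - q) * eval (evA (c k • x k) (s k)) (F q)) atTop (𝓝 0) := by
    simpa [hscaled, zero_pow hm] using (hc0.pow m).mul hsum
  have hlim : Tendsto (fun k => ∑ q ∈ Finset.range (m + 1),
      c k ^ (m - q) * eval (evA (c k • x k) (s k)) (F q)) atTop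
      (𝓝 (∑ q ∈ Finset.range (m + 1), 0 ^ (m - q) * eval (evA v s₀) (F q))) :=
    tendsto_finsetSum _ fun q _ => (hc0.pow _).mul (hev _)
  have htop : ∑ q ∈ Finset.range (m + 1), (0 : ℂ) ^ (m - q) * eval (evA v s₀) (F q) =
      eval (evA v s₀) (F m) := by
    rw [Finset.sum_range_succ, Finset.sum_eq_zero fun q hq => by
      rw [zero_pow (by simp at hq; omega), zero_mul]]
    simp
  rw [← htop]
  exact tendsto_nhds_unique hlim hlim₀

theorem stmt6_general {n d : ℕ} (hd : 2 ≤ d) (P : MvPolynomial (XS n) ℂ)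
    (hdeg : ∃ ε > (0:ℝ), ∀ s : ℂ, ‖s‖ < ε → DegXAt d P s)
    (x : ℕ → Fin n → ℂ) (s : ℕ → ℂ)
    (hcrit : ∀ k, CritPt P (x k) (s k))
    (hs : Tendsto s atTop (nhds 0))
    (v : Fin n → ℂ)
    (c : ℕ → ℂ)
    (hcx : Tendsto (fun k => c k • x k) atTop (nhds v))
    (hc0 : Tendsto c atTop (nhds 0)) :
    WCond d P v 0 ∧
      ∀ t₀ : ℂ, Tendsto (fun k => eval (evA (x k) (s k)) P) atTop (nhds t₀) →
        eval (evA v 0) (xpart P (d-1)) = 0 := by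
  obtain ⟨ε, hε, hdegs⟩ := hdeg
  have hhigh : ∀ᶠ k in atTop, ∀ q, d < q → ∀ y, eval (evA y (s k)) (xpart P q) = 0 :=
    (hs.eventually (Metric.ball_mem_nhds 0 hε)).mono fun k hk => (hdegs _ (by simpa using hk)).1
  obtain ⟨m, rfl⟩ : ∃ m, d = m + 1 := ⟨d - 1, by omega⟩
  have hm : m ≠ 0 := by omega
  refine ⟨fun i => ?_, fun t₀ ht => ?_⟩
  · refine eval_eq_zero_of_tendsto_sum hm
      (fun q => (isWeightedHomogeneous_xpart P (q + 1)).pderiv (by simp [wtx])) hs hc0 hcx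
      ((tendsto_const_nhds (x := (0 : ℂ))).congr' (hhigh.mono fun k hk => ?_))
    rw [← hcrit k i, eval_pderiv_inl_eq_sum_xpart hk, Finset.sum_range_succ' _ (m + 1),
      pderiv_inl_xpart_zero, map_zero, add_zero]
  · have := eval_eq_zero_of_tendsto_sum hm
      (fun q => (isWeightedHomogeneous_xpart P q).C_mul (((m + 1 : ℕ) : ℂ) - q)) hs hc0 hcx
      ((ht.const_mul ((m + 1 : ℕ) : ℂ)).congr' (hhigh.mono fun k hk => ?_))
    · simpa using this
    · rw [natCast_mul_eval_eq_sum_xpart (hcrit k) hk]; simp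

/-- For a FISI deformation: if a sequence of affine critical points
`(x_k, s_k)` has `s_k → 0`, `|x_k| → ∞` and `[x_k : 1] → [v : 0]` in `ℙⁿ` (the latter
encoded by scalars `c_k → 0` with `c_k • x_k → v`), then `[v] ∈ W₀`; if moreover the
critical values `P(x_k, s_k)` converge to some finite `t₀` then also `[v] ∈ Σ₀`. -/
theorem stmt6 {n d : ℕ} (hn : 2 ≤ n) (hd : 2 ≤ d) (P : MvPolynomial (XS n) ℂ)
    (hdeg : ∃ ε > (0:ℝ), ∀ s : ℂ, ‖s‖ < ε → DegXAt d P s)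
    (hfisi : FISIdef d P)
    (x : ℕ → Fin n → ℂ) (s : ℕ → ℂ)
    (hcrit : ∀ k, CritPt P (x k) (s k))
    (hs : Tendsto s atTop (nhds 0))
    (hxinf : Tendsto (fun k => ‖x k‖) atTop atTop)
    (v : Fin n → ℂ) (hv : v ≠ 0)
    (c : ℕ → ℂ)
    (hcx : Tendsto (fun k => c k • x k) atTop (nhds v))
    (hc0 : Tendsto c atTop (nhds 0)) :
    WCond d P v 0 ∧
      ∀ t₀ : ℂ, Tendsto (fun k => eval (evA (x k) (s k)) P) atTop (nhds t₀) →
        eval (evA v 0) (xpart P (d-1)) = 0 :=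
  stmt6_general hd P hdeg x s hcrit hs v c hcx hc0
end
end
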